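/- arXiv:2604.20744 — 4 statements merged into one kernel-verified Lean document; each statement's English description precedes it below -/
import Mathlib

section
/- Let V be a type and d : V → V → ℝ satisfy d(u,v) ≥ 0 for all u, v and the directed triangle inequality d(u,w) ≤ d(u,v) + d(v,w) for all u, v, w. Let l : Fin K → V with K ≥ 1 be landmarks and let A_fwd : Fin m_fwd → Fin K → ℝ and A_bwd : Fin m_bwd → Fin K → ℝ be row-stochastic with m_fwd ≥ 1 and m_bwd ≥ 1. Define forward labels y_fwd i (v) = Σ_k (A_fwd) i k · d(l k, v), backward labels y_bwd i (v) = Σ_k (A_bwd) i k · d(v, l k), the compressed heuristic h_A(u,t) = max(0, max over i of (y_fwd i (t) − y_fwd i (u)), max over i of (y_bwd i (u) − y_bwd i (t))), and the directed ALT heuristic h_ALT(u,t) = max(0, max over k of (d(l k, t) − d(l k, u)), max over k of (d(u, l k) − d(t, l k))). Then for all u, t ∈ V: h_A(u,t) ≤ h_ALT(u,t) ≤ d(u,t). -/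
/-- Maximum of a real-valued function over `Fin K`, given `1 ≤ K`. -/
noncomputable def fmax {K : ℕ} (hK : 1 ≤ K) (f : Fin K → ℝ) : ℝ :=
  Finset.univ.sup' (Finset.univ_nonempty_iff.mpr ⟨⟨0, hK⟩⟩) f

lemma fmax_le {K : ℕ} (hK : 1 ≤ K) {f : Fin K → ℝ} {c : ℝ}
    (h : ∀ k, f k ≤ c) : fmax hK f ≤ c :=
  Finset.sup'_le _ _ fun k _ => h k

lemma le_fmax {K : ℕ} (hK : 1 ≤ K) (f : Fin K → ℝ) (k : Fin K) :
    f k ≤ fmax hK f :=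
  Finset.le_sup' _ (Finset.mem_univ k)

/-- Row-stochastic compression preserves admissibility (directed case):
the compressed heuristic is bounded by the directed ALT heuristic, which is
bounded by the distance. -/
theorem row_stochastic_compression_admissible_directed {V : Type*} (d : V → V → ℝ)
    (hnn : ∀ u v, 0 ≤ d u v)
    (htri : ∀ u v w, d u w ≤ d u v + d v w)
    {K mf mb : ℕ} (hK : 1 ≤ K) (hmf : 1 ≤ mf) (hmb : 1 ≤ mb)
    (l : Fin K → V)
    (Afwd : Fin mf → Fin K → ℝ) (Abwd : Fin mb → Fin K → ℝ)
    (hAfwd0 : ∀ i k, 0 ≤ Afwd i k) (hAfwd1 : ∀ i, ∑ k, Afwd i k = 1)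
    (hAbwd0 : ∀ i k, 0 ≤ Abwd i k) (hAbwd1 : ∀ i, ∑ k, Abwd i k = 1)
    (u t : V) :
    (max 0 (max
        (fmax hmf (fun i => (∑ k, Afwd i k * d (l k) t) - (∑ k, Afwd i k * d (l k) u)))
        (fmax hmb (fun i => (∑ k, Abwd i k * d u (l k)) - (∑ k, Abwd i k * d t (l k)))))
      ≤ max 0 (max (fmax hK (fun k => d (l k) t - d (l k) u))
                   (fmax hK (fun k => d u (l k) - d t (l k))))) ∧
    (max 0 (max (fmax hK (fun k => d (l k) t - d (l k) u))
                (fmax hK (fun k => d u (l k) - d t (l k)))) ≤ d u t) := by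
  constructor
  · apply max_le (le_max_left _ _)
    apply le_trans (max_le_max _ _) (le_max_right 0 _)
    · apply fmax_le
      intro i
      calc (∑ k, Afwd i k * d (l k) t) - (∑ k, Afwd i k * d (l k) u)
          = ∑ k, Afwd i k * (d (l k) t - d (l k) u) := by
            rw [← Finset.sum_sub_distrib]; congr 1; ext k; ring
        _ ≤ ∑ k, Afwd i k * fmax hK (fun k => d (l k) t - d (l k) u) := by
            apply Finset.sum_le_sum; intro k _
            exact mul_le_mul_of_nonneg_left (le_fmax hK (fun k => d (l k) t - d (l k) u) k) (hAfwd0 i k)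
        _ = fmax hK (fun k => d (l k) t - d (l k) u) := by
            rw [← Finset.sum_mul, hAfwd1, one_mul]
    · apply fmax_le
      intro i
      calc (∑ k, Abwd i k * d u (l k)) - (∑ k, Abwd i k * d t (l k))
          = ∑ k, Abwd i k * (d u (l k) - d t (l k)) := by
            rw [← Finset.sum_sub_distrib]; congr 1; ext k; ring
        _ ≤ ∑ k, Abwd i k * fmax hK (fun k => d u (l k) - d t (l k)) := by
            apply Finset.sum_le_sum; intro k _
            exact mul_le_mul_of_nonneg_left (le_fmax hK (fun k => d u (l k) - d t (l k)) k) (hAbwd0 i k)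
        _ = fmax hK (fun k => d u (l k) - d t (l k)) := by
            rw [← Finset.sum_mul, hAbwd1, one_mul]
  · apply max_le (hnn u t)
    apply max_le
    · apply fmax_le; intro k
      have := htri (l k) u t; linarith
    · apply fmax_le; intro k
      have := htri u t (l k); linarith
end

section
/- Let V be a type and d : V → V → ℝ satisfy d(u,v) ≥ 0, d(u,v) = d(v,u), and d(u,w) ≤ d(u,v) + d(v,w) for all u, v, w. Let S be a nonempty finite set of landmarks in V and let r ≥ 0 be such that for every v ∈ V there exists l ∈ S with d(v,l) ≤ r (S has covering radius at most r). Then for all u, t ∈ V: d(u,t) − (max over l ∈ S of |d(l,u) − d(l,t)|) ≤ 2·r. -/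
/-- Covering radius bound (undirected case): if every vertex is within
distance `r` of some landmark in `S`, then the ALT heuristic restricted to
`S` underestimates the distance by at most `2 * r`. -/
theorem covering_radius_bound_undirected {V : Type*} (d : V → V → ℝ)
    (hnn : ∀ u v, 0 ≤ d u v)
    (hsymm : ∀ u v, d u v = d v u)
    (htri : ∀ u v w, d u w ≤ d u v + d v w)
    (S : Finset V) (hS : S.Nonempty)
    (r : ℝ) (hr : 0 ≤ r)
    (hcover : ∀ v : V, ∃ l ∈ S, d v l ≤ r)
    (u t : V) :
    d u t - S.sup' hS (fun l => |d l u - d l t|) ≤ 2 * r := by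
  obtain ⟨l, hl, hlu⟩ := hcover u
  have h1 : d u t - 2 * r ≤ |d l u - d l t| := by
    have h2 : d u t ≤ d u l + d l t := htri u l t
    have h3 : d l t - d l u ≤ |d l u - d l t| := by
      rw [abs_sub_comm]; exact le_abs_self _
    have : d l u = d u l := hsymm l u
    linarith
  have h4 : |d l u - d l t| ≤ S.sup' hS (fun l => |d l u - d l t|) :=
    Finset.le_sup' (fun x => |d x u - d x t|) hl
  linarith
end

section
/- Let V be a type and d : V → V → ℝ satisfy d(u,v) ≥ 0 for all u, v and the directed triangle inequality d(u,w) ≤ d(u,v) + d(v,w) for all u, v, w. Let S be a nonempty finite set of landmarks in V and let r ≥ 0 be such that for every v ∈ V there exists l ∈ S with max(d(l,v), d(v,l)) ≤ r (S has symmetrized covering radius at most r). Define h_ALT^S(u,t) = max(0, max over l ∈ S of (d(l,t) − d(l,u)), max over l ∈ S of (d(u,l) − d(t,l))). Then for all u, t ∈ V: d(u,t) − h_ALT^S(u,t) ≤ 2·r. -/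
/-- Covering radius bound (directed case): if every vertex is within
symmetrized distance `r` of some landmark in `S`, then the directed ALT
heuristic restricted to `S` underestimates the distance by at most `2 * r`. -/
theorem covering_radius_bound_directed {V : Type*} (d : V → V → ℝ)
    (hnn : ∀ u v, 0 ≤ d u v)
    (htri : ∀ u v w, d u w ≤ d u v + d v w)
    (S : Finset V) (hS : S.Nonempty)
    (r : ℝ) (hr : 0 ≤ r)
    (hcover : ∀ v : V, ∃ l ∈ S, max (d l v) (d v l) ≤ r)
    (u t : V) :
    d u t - max 0 (max (S.sup' hS (fun l => d l t - d l u))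
                       (S.sup' hS (fun l => d u l - d t l))) ≤ 2 * r := by
  obtain ⟨l, hl, hml⟩ := hcover u
  have h1 : d l u ≤ r := le_trans (le_max_left _ _) hml
  have h2 : d u l ≤ r := le_trans (le_max_right _ _) hml
  have hut : d u t ≤ r + d l t := le_trans (htri u l t) (by linarith)
  have hsup : d l t - d l u ≤ S.sup' hS (fun l => d l t - d l u) :=
    Finset.le_sup' (fun l => d l t - d l u) hl
  have hmax : d l t - r ≤ max 0 (max (S.sup' hS (fun l => d l t - d l u))
      (S.sup' hS (fun l => d u l - d t l))) := by
    calc d l t - r ≤ d l t - d l u := by linarith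
    _ ≤ _ := le_trans hsup (le_trans (le_max_left _ _) (le_max_right _ _))
  linarith
end

section
/- Let V be a type and d : V → V → ℝ satisfy d(u,v) ≥ 0, d(u,v) = d(v,u), and d(u,w) ≤ d(u,v) + d(v,w) for all u, v, w. Let S be a nonempty finite set of landmarks in V and let r* ≥ 0 be such that for every v ∈ V there exists l ∈ S with d(v,l) ≤ 2·r* (S has covering radius within a factor 2 of r*, as guaranteed for farthest-point sampling by the Gonzalez 2-approximation). Then for all u, t ∈ V: d(u,t) − (max over l ∈ S of |d(l,u) − d(l,t)|) ≤ 4·r*. -/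
/-- FPS landmark selection (Gonzalez 2-approximation consequence): if every
vertex is within distance `2 * rstar` of some landmark in `S`, then the ALT
heuristic restricted to `S` underestimates the distance by at most `4 * rstar`. -/
theorem fps_covering_bound {V : Type*} (d : V → V → ℝ)
    (hnn : ∀ u v, 0 ≤ d u v)
    (hsymm : ∀ u v, d u v = d v u)
    (htri : ∀ u v w, d u w ≤ d u v + d v w)
    (S : Finset V) (hS : S.Nonempty)
    (rstar : ℝ) (hrstar : 0 ≤ rstar)
    (hcover : ∀ v : V, ∃ l ∈ S, d v l ≤ 2 * rstar)
    (u t : V) :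
    d u t - S.sup' hS (fun l => |d l u - d l t|) ≤ 4 * rstar := by
  obtain ⟨l, hlS, hl⟩ := hcover u
  have h1 : d l t - d l u ≤ |d l u - d l t| := by
    rw [abs_sub_comm]; exact le_abs_self _
  have h2 : d u t ≤ d u l + d l t := htri u l t
  have h3 : d u t - |d l u - d l t| ≤ 4 * rstar := by
    have hlu : d l u = d u l := hsymm l u
    nlinarith [hnn u l]
  calc d u t - S.sup' hS (fun l => |d l u - d l t|)
      ≤ d u t - |d l u - d l t| := by
        have := Finset.le_sup' (fun l => |d l u - d l t|) hlS
        linarith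
    _ ≤ 4 * rstar := h3
end
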